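/- Let N be a free ℤ-module with a symmetric bilinear form ⟨·,·⟩, and let f, w ∈ N with ⟨f, f⟩ = 0 and ⟨w, w⟩ even. Set w̃ := ½⟨w,w⟩f − w. Then the Eichler–Siegel transformation ψ_{f,w} factors as a product of two pseudo-reflections: ψ_{f,w} = s_{w̃, f} ∘ s_{f, w}, i.e., for every x ∈ N one has ψ_{f,w}(x) = s_{w̃,f}(s_{f,w}(x)). -/

import Mathlib

/-- The Eichler–Siegel transformation `ψ_{f,w}` associated to a bilinear form `B` on a
`ℤ`-module `N` and vectors `f, w ∈ N`, where `h` denotes the half `½⟨w,w⟩` of the (even)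
squared length of `w`:  `ψ_{f,w}(x) = x + ⟨x,f⟩w − ⟨x,w⟩f − ½⟨w,w⟩⟨x,f⟩f`. -/
noncomputable def eichlerSiegel {N : Type*} [AddCommGroup N] [Module ℤ N]
    (B : LinearMap.BilinForm ℤ N) (f w : N) (h : ℤ) : Module.End ℤ N :=
  LinearMap.id + (LinearMap.toSpanSingleton ℤ N w) ∘ₗ (B.flip f)
    - (LinearMap.toSpanSingleton ℤ N f) ∘ₗ (B.flip w)
    - h • ((LinearMap.toSpanSingleton ℤ N f) ∘ₗ (B.flip f))

/-- The pseudo-reflection `s_{u,v}(x) = x − ⟨x,v⟩u`. -/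
noncomputable def pseudoRefl {N : Type*} [AddCommGroup N] [Module ℤ N]
    (B : LinearMap.BilinForm ℤ N) (u v : N) : Module.End ℤ N :=
  LinearMap.id - (LinearMap.toSpanSingleton ℤ N u) ∘ₗ (B.flip v)

/-! Since `⟨f,f⟩ = 0`, the pseudo-reflection `s_{f,w}` does not change `⟨·,f⟩`, so
`s_{w̃,f}(s_{f,w} x) = x − ⟨x,w⟩f − ⟨x,f⟩(h f − w)`, which is `ψ_{f,w}(x)` term by term. -/

section

variable {N : Type*} [AddCommGroup N] (B : LinearMap.BilinForm ℤ N)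

theorem pseudoRefl_apply (u v x : N) : pseudoRefl B u v x = x - B x v • u := rfl

theorem eichlerSiegel_apply (f w : N) (h : ℤ) (x : N) :
    eichlerSiegel B f w h x = x + B x f • w - B x w • f - h • B x f • f := rfl

theorem apply_pseudoRefl_self_right {f : N} (hf : B f f = 0) (w x : N) :
    B (pseudoRefl B f w x) f = B x f := by
  simp [pseudoRefl_apply, hf]

end

theorem eichlerSiegel_eq_comp_pseudoRefl_general
    {N : Type*} [AddCommGroup N] [Module ℤ N]
    (B : LinearMap.BilinForm ℤ N)
    (f w : N) (h : ℤ) (hf : B f f = 0) :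
    ∀ x : N, eichlerSiegel B f w h x =
      pseudoRefl B (h • f - w) f (pseudoRefl B f w x) := by
  -- A `ℤ`-module structure on an additive group is unique, so we may take the canonical one.
  obtain rfl := Subsingleton.elim ‹Module ℤ N› (AddCommGroup.toIntModule N)
  intro x
  rw [pseudoRefl_apply B (h • f - w), apply_pseudoRefl_self_right B hf, pseudoRefl_apply,
    eichlerSiegel_apply]
  module

/-- if `⟨f,f⟩ = 0` and `⟨w,w⟩ = 2h`, then with `w̃ := ½⟨w,w⟩f − w = h•f − w`
the Eichler–Siegel transformation factors as `ψ_{f,w} = s_{w̃,f} ∘ s_{f,w}`. -/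
theorem eichlerSiegel_eq_comp_pseudoRefl
    {N : Type*} [AddCommGroup N] [Module ℤ N] [Module.Free ℤ N]
    (B : LinearMap.BilinForm ℤ N) (hsymm : ∀ x y, B x y = B y x)
    (f w : N) (h : ℤ) (hf : B f f = 0) (hw : B w w = 2 * h) :
    ∀ x : N, eichlerSiegel B f w h x =
      pseudoRefl B (h • f - w) f (pseudoRefl B f w x) :=
  eichlerSiegel_eq_comp_pseudoRefl_general B f w h hf
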